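/- arXiv:2407.20206 — 5 statements merged into one kernel-verified Lean document; each statement's English description precedes it below -/
import Mathlib

section
/- Let H : ℂ × ℂ → ℂ be analytic at the point (0,0). If H(u, exp(-1/u)) = 0 for all sufficiently small real u > 0, then H vanishes identically on some neighborhood of (0,0) in ℂ × ℂ. -/
/-!
Expand `H (x, y) = ∑ₙ yⁿ aₙ(x)` in the second variable: the coefficients `aₙ` are analytic in `x`
and obey Cauchy bounds `‖aₙ(x)‖ ≤ M / rⁿ`. If `a₀, …, aₖ₋₁` vanish, the zero `y = exp (-1/u)` of
`H (u, ·)` forces `‖aₖ(u)‖ = O(exp (-1/u))` as `u → 0⁺`. A one-variable analytic function that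
does not vanish near `0` has exact order `uⁿ` there, which decays more slowly than `exp (-1/u)`;
so `aₖ` vanishes near `0`, hence on the whole disc. By induction every `aₙ` vanishes, and so
does `H`.
-/

open Filter Metric Set Topology Nat

theorem tendsto_inv_pow_mul_exp_neg_inv_nhdsGT_zero (n : ℕ) :
    Tendsto (fun u : ℝ => u⁻¹ ^ n * Real.exp (-1 / u)) (𝓝[>] 0) (𝓝 0) := by
  refine ((Real.tendsto_pow_mul_exp_neg_atTop_nhds_zero n).comp tendsto_inv_nhdsGT_zero).congr
    fun u => ?_
  simp [neg_div]

theorem AnalyticAt.eventually_eq_zero_of_norm_le_mul_exp_neg_inv {F : Type*}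
    [NormedAddCommGroup F] [NormedSpace ℂ F] {f : ℂ → F} (hf : AnalyticAt ℂ f 0) {K : ℝ}
    (hK : ∀ᶠ u : ℝ in 𝓝[>] 0, ‖f u‖ ≤ K * Real.exp (-1 / u)) :
    ∀ᶠ z in 𝓝 0, f z = 0 := by
  by_contra hne
  obtain ⟨n, g, hg, hg0, hfg⟩ := hf.exists_eventuallyEq_pow_smul_nonzero_iff.mpr hne
  have hcoe : Tendsto ((↑) : ℝ → ℂ) (𝓝[>] 0) (𝓝 0) :=
    Complex.continuous_ofReal.tendsto' 0 0 Complex.ofReal_zero |>.mono_left nhdsWithin_le_nhds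
  have hbound : ∀ᶠ u : ℝ in 𝓝[>] 0, ‖g u‖ ≤ K * (u⁻¹ ^ n * Real.exp (-1 / u)) := by
    filter_upwards [hK, hcoe.eventually hfg, self_mem_nhdsWithin] with u hKu hfgu (hu : 0 < u)
    rw [hfgu, sub_zero, norm_smul, norm_pow, Complex.norm_real, Real.norm_of_nonneg hu.le] at hKu
    rw [inv_pow, ← mul_assoc, mul_comm K, mul_assoc, ← div_eq_inv_mul, le_div_iff₀' (by positivity)]
    exact hKu
  have hsmall := squeeze_zero_norm' hbound
    ((tendsto_inv_pow_mul_exp_neg_inv_nhdsGT_zero n).const_mul K |>.trans (by simp))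
  exact hg0 (tendsto_nhds_unique (hg.continuousAt.tendsto.comp hcoe) hsmall)

theorem norm_le_of_hasSum_pow_smul_eq_zero {𝕜 F : Type*} [NormedField 𝕜] [NormedAddCommGroup F]
    [NormedSpace 𝕜 F] {a : ℕ → F} {y : 𝕜} {M r : ℝ} {k : ℕ}
    (hsum : HasSum (fun n => y ^ n • a n) 0) (ha : ∀ j < k, a j = 0)
    (hM : ∀ n, ‖a n‖ ≤ M / r ^ n) (hr : 0 < r) (hy : ‖y‖ ≤ r / 2) (hy0 : y ≠ 0) :
    ‖a k‖ ≤ 2 * M / r ^ (k + 1) * ‖y‖ := by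
  set q := ‖y‖ / r
  have hq : q ≤ 1 / 2 := by rw [div_le_iff₀ hr]; linarith
  have hhead : ∑ i ∈ Finset.range (k + 1), y ^ i • a i = y ^ k • a k := by
    rw [Finset.sum_range_succ, Finset.sum_eq_zero fun j hj => by
      rw [ha j (Finset.mem_range.mp hj), smul_zero], zero_add]
  have htail : HasSum (fun i => y ^ (i + (k + 1)) • a (i + (k + 1))) (-(y ^ k • a k)) := by
    simpa [hhead] using (hasSum_nat_add_iff' (k + 1)).mpr hsum
  have hgeom : HasSum (fun i => M * q ^ (k + 1) * q ^ i) (M * q ^ (k + 1) * (1 - q)⁻¹) :=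
    (hasSum_geometric_of_lt_one (by positivity) (by linarith)).mul_left _
  have hterm : ∀ i, ‖y ^ (i + (k + 1)) • a (i + (k + 1))‖ ≤ M * q ^ (k + 1) * q ^ i := by
    intro i
    calc ‖y ^ (i + (k + 1)) • a (i + (k + 1))‖
        ≤ ‖y‖ ^ (i + (k + 1)) * (M / r ^ (i + (k + 1))) := by
          rw [norm_smul, norm_pow]; gcongr; exact hM _
      _ = M * q ^ (k + 1) * q ^ i := by simp only [q, div_pow]; field_simp; ring
  have hM0 : 0 ≤ M := (norm_nonneg _).trans ((hM 0).trans_eq (by simp))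
  have key : ‖y‖ ^ k * ‖a k‖ ≤ ‖y‖ ^ k * (2 * M / r ^ (k + 1) * ‖y‖) :=
    calc ‖y‖ ^ k * ‖a k‖ = ‖-(y ^ k • a k)‖ := by rw [norm_neg, norm_smul, norm_pow]
      _ ≤ M * q ^ (k + 1) * (1 - q)⁻¹ := htail.norm_le_of_bounded hgeom hterm
      _ ≤ M * q ^ (k + 1) * 2 := by
          gcongr; rw [inv_le_comm₀ (by linarith) two_pos]; linarith
      _ = ‖y‖ ^ k * (2 * M / r ^ (k + 1) * ‖y‖) := by simp only [q, div_pow]; field_simp; ring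
  exact le_of_mul_le_mul_left key (by positivity)

section Slice

variable {𝕜 E F : Type*} [NontriviallyNormedField 𝕜] [NormedAddCommGroup E] [NormedSpace 𝕜 E]
  [NormedAddCommGroup F] [NormedSpace 𝕜 F]

theorem AnalyticOnNhd.differentiableOn_slice {f : E × 𝕜 → F} {ρ : ℝ}
    (hf : AnalyticOnNhd 𝕜 f (ball 0 ρ)) {x : E} (hx : ‖x‖ < ρ) :
    DifferentiableOn 𝕜 (fun y => f (x, y)) (ball 0 ρ) :=
  hf.differentiableOn.comp ((differentiableOn_const x).prodMk differentiableOn_id)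
    fun y hy => by simpa [hx] using hy

variable [CompleteSpace F]

theorem AnalyticAt.deriv_snd {f : E × 𝕜 → F} {p : E × 𝕜} (hf : AnalyticAt 𝕜 f p) :
    AnalyticAt 𝕜 (fun q : E × 𝕜 => deriv (fun y => f (q.1, y)) q.2) p := by
  have hfderiv : AnalyticAt 𝕜 (fun q => fderiv 𝕜 f q (0, 1)) p :=
    ((ContinuousLinearMap.apply 𝕜 F ((0 : E), (1 : 𝕜))).analyticAt _).comp hf.fderiv
  refine hfderiv.congr ?_
  filter_upwards [hf.eventually_analyticAt] with ⟨x, y⟩ hq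
  exact (hq.differentiableAt.hasFDerivAt.comp_hasDerivAt y
    ((hasDerivAt_const y x).prodMk (hasDerivAt_id y))).deriv.symm

theorem AnalyticAt.iteratedDeriv_snd {f : E × 𝕜 → F} {p : E × 𝕜} (hf : AnalyticAt 𝕜 f p)
    (n : ℕ) : AnalyticAt 𝕜 (fun q : E × 𝕜 => iteratedDeriv n (fun y => f (q.1, y)) q.2) p := by
  induction n generalizing f with
  | zero => simpa using hf
  | succ n ih => simpa only [iteratedDeriv_succ'] using ih hf.deriv_snd

end Slice

section TaylorCoeffSnd

variable {E F : Type*} [NormedAddCommGroup E] [NormedSpace ℂ E] [NormedAddCommGroup F]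
  [NormedSpace ℂ F] [CompleteSpace F]

noncomputable def taylorCoeffSnd (f : E × ℂ → F) (n : ℕ) (x : E) : F :=
  (n ! : ℂ)⁻¹ • iteratedDeriv n (fun y => f (x, y)) 0

variable {f : E × ℂ → F} {ρ : ℝ}

theorem analyticOnNhd_taylorCoeffSnd (hf : AnalyticOnNhd ℂ f (ball 0 ρ)) (n : ℕ) :
    AnalyticOnNhd ℂ (taylorCoeffSnd f n) (ball 0 ρ) := fun x hx =>
  (AnalyticAt.comp (f := fun x : E => (x, (0 : ℂ)))
    ((hf (x, 0) (by simpa using hx)).iteratedDeriv_snd n)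
    (analyticAt_id.prod analyticAt_const)).const_smul

theorem hasSum_taylorCoeffSnd (hf : AnalyticOnNhd ℂ f (ball 0 ρ)) {x : E} {y : ℂ}
    (hxy : (x, y) ∈ ball (0 : E × ℂ) ρ) :
    HasSum (fun n => y ^ n • taylorCoeffSnd f n x) (f (x, y)) := by
  rw [mem_ball_zero_iff, Prod.norm_mk, max_lt_iff] at hxy
  simpa [taylorCoeffSnd, smul_comm ((_ : ℂ)⁻¹)] using
    Complex.hasSum_taylorSeries_on_ball (hf.differentiableOn_slice hxy.1)
      (mem_ball_zero_iff.mpr hxy.2)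

theorem norm_taylorCoeffSnd_le (hf : AnalyticOnNhd ℂ f (ball 0 ρ)) {r M : ℝ}
    (hr : 0 < r) (hrρ : r < ρ) (hM : ∀ q ∈ closedBall (0 : E × ℂ) r, ‖f q‖ ≤ M) {x : E}
    (hx : ‖x‖ ≤ r) (n : ℕ) : ‖taylorCoeffSnd f n x‖ ≤ M / r ^ n := by
  have hcauchy := Complex.norm_iteratedDeriv_le_of_forall_mem_sphere_norm_le n hr
    ((hf.differentiableOn_slice (hx.trans_lt hrρ)).diffContOnCl_ball (closedBall_subset_ball hrρ))
    fun y hy => hM _ (by simp_all)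
  rw [taylorCoeffSnd, norm_smul, norm_inv, Complex.norm_natCast, inv_mul_le_iff₀ (by positivity)]
  rwa [mul_div_assoc] at hcauchy

theorem eqOn_zero_of_forall_taylorCoeffSnd_eqOn_zero (hf : AnalyticOnNhd ℂ f (ball 0 ρ))
    (hcoeff : ∀ n, EqOn (taylorCoeffSnd f n) 0 (ball 0 ρ)) : EqOn f 0 (ball 0 ρ) := by
  rintro ⟨x, y⟩ hxy
  have hx : x ∈ ball 0 ρ := by
    rw [mem_ball_zero_iff, Prod.norm_mk, max_lt_iff] at hxy
    exact mem_ball_zero_iff.mpr hxy.1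
  exact (hasSum_taylorCoeffSnd hf hxy).unique (by simp [hcoeff _ hx])

end TaylorCoeffSnd

theorem eqOn_zero_taylorCoeffSnd_of_vanishing_on_exp_curve {F : Type*} [NormedAddCommGroup F]
    [NormedSpace ℂ F] [CompleteSpace F] {H : ℂ × ℂ → F} {ρ r M : ℝ}
    (hH : AnalyticOnNhd ℂ H (ball 0 ρ)) (hr : 0 < r) (hrρ : r < ρ)
    (hM : ∀ q ∈ closedBall (0 : ℂ × ℂ) r, ‖H q‖ ≤ M)
    (hvan : ∀ᶠ u : ℝ in 𝓝[>] 0, H ((u : ℂ), Complex.exp (-1 / (u : ℂ))) = 0) (k : ℕ) :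
    EqOn (taylorCoeffSnd H k) 0 (ball 0 ρ) := by
  induction k using Nat.strong_induction_on with
  | _ k ih =>
  have hexp_small : ∀ᶠ u : ℝ in 𝓝[>] 0, Real.exp (-1 / u) ≤ r / 2 := by
    simpa using (tendsto_inv_pow_mul_exp_neg_inv_nhdsGT_zero 0).eventually
      (eventually_le_nhds (half_pos hr))
  have hu_small : ∀ᶠ u : ℝ in 𝓝[>] 0, u ≤ r :=
    eventually_nhdsWithin_of_eventually_nhds (eventually_le_nhds hr)
  have hbound : ∀ᶠ u : ℝ in 𝓝[>] 0,
      ‖taylorCoeffSnd H k u‖ ≤ 2 * M / r ^ (k + 1) * Real.exp (-1 / u) := by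
    filter_upwards [hvan, hexp_small, hu_small, self_mem_nhdsWithin]
      with u hHu hexp hur (hu : 0 < u)
    have hu_norm : ‖(u : ℂ)‖ ≤ r := by simpa [abs_of_pos hu] using hur
    have hY : ‖Complex.exp (-1 / (u : ℂ))‖ = Real.exp (-1 / u) := by
      rw [← Complex.ofReal_one, ← Complex.ofReal_neg, ← Complex.ofReal_div,
        Complex.norm_exp_ofReal]
    have hsum := hasSum_taylorCoeffSnd hH (x := u) (y := Complex.exp (-1 / u)) <| by
      rw [mem_ball_zero_iff, Prod.norm_mk, max_lt_iff, hY]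
      exact ⟨hu_norm.trans_lt hrρ, by linarith⟩
    rw [hHu] at hsum
    simpa [hY] using norm_le_of_hasSum_pow_smul_eq_zero hsum
      (fun j hj => ih j hj (mem_ball_zero_iff.mpr (hu_norm.trans_lt hrρ)))
      (norm_taylorCoeffSnd_le hH hr hrρ hM hu_norm) hr (hY ▸ hexp) (Complex.exp_ne_zero _)
  have hA := analyticOnNhd_taylorCoeffSnd hH k
  have h0 : (0 : ℂ) ∈ ball 0 ρ := mem_ball_self (hr.trans hrρ)
  exact hA.eqOn_zero_of_preconnected_of_eventuallyEq_zero (convex_ball 0 ρ).isPreconnected h0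
    ((hA 0 h0).eventually_eq_zero_of_norm_le_mul_exp_neg_inv hbound)

/-- If `H : ℂ × ℂ → ℂ` is analytic at `(0,0)` and `H (u, exp (-1/u)) = 0` for all
sufficiently small real `u > 0`, then `H` vanishes identically on a neighborhood
of `(0,0)`. -/
theorem analytic_vanishing_on_exp_curve (H : ℂ × ℂ → ℂ)
    (hH : AnalyticAt ℂ H (0, 0))
    (hvan : ∀ᶠ u : ℝ in nhdsWithin 0 (Set.Ioi 0),
      H ((u : ℂ), Complex.exp (-1 / (u : ℂ))) = 0) :
    ∀ᶠ p : ℂ × ℂ in nhds (0, 0), H p = 0 := by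
  obtain ⟨ρ, hρ, hH⟩ := hH.exists_ball_analyticOnNhd
  have hrρ : ρ / 2 < ρ := half_lt_self hρ
  obtain ⟨M, hM⟩ := (isCompact_closedBall (0 : ℂ × ℂ) (ρ / 2)).exists_bound_of_continuousOn
    (hH.continuousOn.mono (closedBall_subset_ball hrρ))
  have hcoeff := eqOn_zero_taylorCoeffSnd_of_vanishing_on_exp_curve hH (half_pos hρ) hrρ hM hvan
  filter_upwards [ball_mem_nhds _ hρ] using eqOn_zero_of_forall_taylorCoeffSnd_eqOn_zero hH hcoeff
end

section
/- Let n ≥ 1 and let a₀, a₁, …, aₙ : ℂ → ℂ each be meromorphic at 0. If the identity Σ_{i=0}^{n} aᵢ(z) · exp(-i/z) = 0 holds for all z ≠ 0 in some punctured neighborhood of 0 in ℂ, then each aᵢ vanishes on a punctured neighborhood of 0 (equivalently, each aᵢ is the zero germ at 0). -/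
/-!
Along the positive real axis, `exp (-c / x)` with `c > 0` is `o(x ^ k)` for every integer `k`,
whereas a meromorphic function of order `d` at `0` is `O(x ^ d)` and, unless it vanishes near `0`,
not `o(x ^ d)`. In `∑ aᵢ z * exp (-i / z) = 0` the coefficient `a₀ = -∑_{i ≥ 1} aᵢ z * exp (-i / z)`
is therefore `o(x ^ ord a₀)`, so `a₀ = 0`; dividing the relation by `exp (-1 / z)` and inducting on
`n` disposes of the other coefficients.
-/

open Filter Topology Asymptotics

section Meromorphic

variable {𝕜 E : Type*} [NontriviallyNormedField 𝕜] [NormedAddCommGroup E] [NormedSpace 𝕜 E]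
  {f : 𝕜 → E} {x : 𝕜}

theorem MeromorphicAt.isBigO_zpow_meromorphicOrderAt (hf : MeromorphicAt f x) :
    f =O[𝓝[≠] x] fun z => (z - x) ^ (meromorphicOrderAt f x).untop₀ := by
  set d := (meromorphicOrderAt f x).untop₀
  have hbdd := hf.tendsto_nhds_meromorphicTrailingCoeffAt.isBigO_one 𝕜
  refine ((isBigO_refl (fun z => (z - x) ^ d) _).smul hbdd).congr' ?_ (by simp)
  filter_upwards [self_mem_nhdsWithin] with z hz
  rw [Pi.smul_apply', Pi.pow_apply, ← smul_assoc, smul_eq_mul, ← zpow_add₀ (sub_ne_zero.mpr hz),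
    add_neg_cancel, zpow_zero, one_smul]

theorem MeromorphicAt.eventuallyEq_zero_of_isLittleO_zpow_meromorphicOrderAt
    (hf : MeromorphicAt f x) {l : Filter 𝕜} [l.NeBot] (hl : l ≤ 𝓝[≠] x)
    (ho : f =o[l] fun z => (z - x) ^ (meromorphicOrderAt f x).untop₀) :
    f =ᶠ[𝓝[≠] x] 0 := by
  suffices meromorphicOrderAt f x = ⊤ from meromorphicOrderAt_eq_top_iff.mp this
  by_contra hne
  set d := (meromorphicOrderAt f x).untop₀
  have hlim := hf.tendsto_nhds_meromorphicTrailingCoeffAt.mono_left hl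
  have hzero : Tendsto ((· - x) ^ (-d) • f) l (𝓝 0) := by
    rw [← isLittleO_one_iff 𝕜]
    refine ((isBigO_refl (fun z => (z - x) ^ (-d)) l).smul_isLittleO ho).congr' (by rfl) ?_
    filter_upwards [hl self_mem_nhdsWithin] with z hz
    rw [smul_eq_mul, ← zpow_add₀ (sub_ne_zero.mpr hz), neg_add_cancel, zpow_zero]
  exact hf.meromorphicTrailingCoeffAt_ne_zero hne (tendsto_nhds_unique hlim hzero)

end Meromorphic

theorem MeromorphicAt.isLittleO_mul_zpow {𝕜 : Type*} [NontriviallyNormedField 𝕜] {f g : 𝕜 → 𝕜}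
    (hf : MeromorphicAt f 0) {l : Filter 𝕜} (hl : l ≤ 𝓝[≠] 0) (hg : ∀ k : ℤ, g =o[l] (· ^ k))
    (k : ℤ) : (fun z => f z * g z) =o[l] (· ^ k) := by
  set d := (meromorphicOrderAt f 0).untop₀
  refine ((hf.isBigO_zpow_meromorphicOrderAt.mono hl).mul_isLittleO (hg (k - d))).congr'
    (by rfl) ?_
  filter_upwards [hl self_mem_nhdsWithin] with z hz
  rw [sub_zero, ← zpow_add₀ hz, add_sub_cancel]

namespace Complex

theorem tendsto_ofReal_nhdsGT_nhdsNE :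
    Tendsto ((↑) : ℝ → ℂ) (𝓝[>] 0) (𝓝[≠] 0) :=
  (continuous_ofReal.tendsto' 0 0 (by simp)).inf <| tendsto_principal_principal.mpr
    fun _ hx => by simpa using hx.ne'

theorem isLittleO_exp_neg_div_zpow {c : ℝ} (hc : 0 < c) (k : ℤ) :
    (fun z : ℂ => exp (-c / z)) =o[map (↑) (𝓝[>] (0 : ℝ))] (· ^ k) := by
  rw [isLittleO_map, ← isLittleO_norm_norm]
  -- with `t = x⁻¹` this is `t ^ k = o(exp (c * t))` as `t → ∞`
  have hpow_ne : ∀ᶠ t : ℝ in atTop, t ^ k ≠ 0 :=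
    (eventually_gt_atTop 0).mono fun t ht => zpow_ne_zero k ht.ne'
  have h := ((isLittleO_zpow_exp_pos_mul_atTop k hc).inv_rev
    (hpow_ne.mono fun t ht h => absurd h ht)).comp_tendsto tendsto_inv_nhdsGT_zero
  refine h.congr' ?_ ?_
  all_goals filter_upwards [self_mem_nhdsWithin] with x (hx : 0 < x)
  · rw [Function.comp_apply, Function.comp_apply, norm_exp, ← ofReal_neg, ← ofReal_div, ofReal_re,
      neg_div, Real.exp_neg, div_eq_mul_inv]
  · simp [abs_of_pos hx]

end Complex

open Complex in
theorem eventuallyEq_zero_of_sum_mul_exp_neg_div_eq_zero {n : ℕ} {a : Fin (n + 1) → ℂ → ℂ}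
    (ha : ∀ i, MeromorphicAt (a i) 0)
    (hsum : ∀ᶠ z in 𝓝[≠] 0, ∑ i : Fin (n + 1), a i z * exp (-(i : ℕ) / z) = 0) :
    a 0 =ᶠ[𝓝[≠] 0] 0 := by
  set l : Filter ℂ := map (↑) (𝓝[>] (0 : ℝ))
  have hl : l ≤ 𝓝[≠] 0 := tendsto_ofReal_nhdsGT_nhdsNE
  have htail : (fun z => ∑ i : Fin n, a i.succ z * exp (-(i.succ : ℕ) / z)) =o[l]
      (· ^ (meromorphicOrderAt (a 0) 0).untop₀) := by
    refine IsLittleO.fun_sum fun i _ => (ha i.succ).isLittleO_mul_zpow hl (fun k => ?_) _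
    simpa only [ofReal_natCast] using
      isLittleO_exp_neg_div_zpow (c := ((i.succ : ℕ) : ℝ)) (mod_cast i.succ_pos) k
  refine (ha 0).eventuallyEq_zero_of_isLittleO_zpow_meromorphicOrderAt hl ?_
  simp only [sub_zero]
  refine htail.neg_left.congr' ?_ (by rfl)
  filter_upwards [hl hsum] with z hz
  rw [Fin.sum_univ_succ, Fin.val_zero, Nat.cast_zero, neg_zero, zero_div, exp_zero, mul_one] at hz
  exact (eq_neg_iff_add_eq_zero.mpr hz).symm

open Complex in
theorem sum_succ_mul_exp_neg_div_eq_zero {n : ℕ} {a : Fin (n + 2) → ℂ → ℂ} {z : ℂ}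
    (h0 : a 0 z = 0) (hsum : ∑ i : Fin (n + 2), a i z * exp (-(i : ℕ) / z) = 0) :
    ∑ i : Fin (n + 1), a i.succ z * exp (-(i : ℕ) / z) = 0 := by
  have hexp : exp (-1 / z) * ∑ i : Fin (n + 1), a i.succ z * exp (-(i : ℕ) / z) = 0 := by
    rw [Fin.sum_univ_succ, h0, zero_mul, zero_add] at hsum
    rw [Finset.mul_sum, ← hsum]
    refine Finset.sum_congr rfl fun i _ => ?_
    rw [mul_left_comm, ← exp_add, Fin.val_succ]
    push_cast
    ring_nf
  exact (mul_eq_zero.mp hexp).resolve_left (exp_ne_zero _)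

theorem exp_neg_inv_transcendental_general (n : ℕ) (a : Fin (n + 1) → ℂ → ℂ)
    (ha : ∀ i, MeromorphicAt (a i) 0)
    (hsum : ∀ᶠ z in nhdsWithin 0 {(0 : ℂ)}ᶜ,
      ∑ i : Fin (n + 1), a i z * Complex.exp (-(i : ℕ) / z) = 0) :
    ∀ i, ∀ᶠ z in nhdsWithin 0 {(0 : ℂ)}ᶜ, a i z = 0 := by
  induction n with
  | zero =>
    intro i
    rw [Fin.fin_one_eq_zero i]
    exact eventuallyEq_zero_of_sum_mul_exp_neg_div_eq_zero ha hsum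
  | succ n ih =>
    have h0 := eventuallyEq_zero_of_sum_mul_exp_neg_div_eq_zero ha hsum
    have hshift := ih (fun i => a i.succ) (fun i => ha i.succ)
      (by filter_upwards [h0, hsum] with z using sum_succ_mul_exp_neg_div_eq_zero)
    exact Fin.cases h0 hshift

/-- `exp (-1/z)` is transcendental over germs of meromorphic functions at `0`:
if `a₀, …, aₙ` (`n ≥ 1`) are meromorphic at `0` and
`∑ i, aᵢ z * exp (-i/z) = 0` on a punctured neighborhood of `0`, then each `aᵢ`
vanishes on a punctured neighborhood of `0`. -/
theorem exp_neg_inv_transcendental (n : ℕ) (hn : 1 ≤ n) (a : Fin (n + 1) → ℂ → ℂ)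
    (ha : ∀ i, MeromorphicAt (a i) 0)
    (hsum : ∀ᶠ z in nhdsWithin 0 {(0 : ℂ)}ᶜ,
      ∑ i : Fin (n + 1), a i z * Complex.exp (-(i : ℕ) / z) = 0) :
    ∀ i, ∀ᶠ z in nhdsWithin 0 {(0 : ℂ)}ᶜ, a i z = 0 :=
  exp_neg_inv_transcendental_general n a ha hsum
end

section
/- Let n ≥ 1 and let a₀, a₁, …, aₙ : ℂ → ℂ each be meromorphic at 0. If the identity Σ_{i=0}^{n} aᵢ(z) · exp(i/z) = 0 holds for all z ≠ 0 in some punctured neighborhood of 0 in ℂ, then each aᵢ vanishes on a punctured neighborhood of 0 (equivalently, each aᵢ is the zero germ at 0). -/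
/-!
Take the largest exponent `r k` whose coefficient `a k` is not the zero germ, divide the relation
by `a k z * exp (r k / z)` and let `z = t → 0⁺` along the reals. The `k`-th term becomes `1`, and
every other surviving term is a meromorphic function times `exp (c / t)` with `Re c < 0`; it tends
to `0` because a meromorphic function grows at most like a power of `1 / t`.
-/

open Filter Topology Asymptotics

theorem MeromorphicAt.exists_isBigO_zpow {𝕜 E : Type*} [NontriviallyNormedField 𝕜]
    [NormedAddCommGroup E] [NormedSpace 𝕜 E] {f : 𝕜 → E} {x : 𝕜} (hf : MeromorphicAt f x) :
    ∃ m : ℤ, f =O[𝓝[≠] x] fun z => (z - x) ^ m := by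
  obtain ⟨n, hn⟩ := hf
  refine ⟨-n, ?_⟩
  have hbdd := (hn.continuousAt.tendsto.mono_left (nhdsWithin_le_nhds (s := {x}ᶜ))).isBigO_one 𝕜
  have hsmul : (fun z => (z - x) ^ (-(n : ℤ)) • ((z - x) ^ n • f z)) =O[𝓝[≠] x]
      fun z => (z - x) ^ (-(n : ℤ)) := by
    simpa only [smul_eq_mul, mul_one] using
      (isBigO_refl (fun z => (z - x) ^ (-(n : ℤ))) (𝓝[≠] x)).smul hbdd
  refine hsmul.congr' ?_ .rfl
  filter_upwards [self_mem_nhdsWithin] with z hz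
  rw [smul_smul, zpow_neg, zpow_natCast, inv_mul_cancel₀ (pow_ne_zero _ (sub_ne_zero.2 hz)),
    one_smul]

theorem tendsto_ofReal_nhdsGT_zero : Tendsto ((↑) : ℝ → ℂ) (𝓝[>] 0) (𝓝[≠] 0) :=
  tendsto_nhdsWithin_of_tendsto_nhds_of_eventually_within _
    (Complex.continuous_ofReal.tendsto' 0 0 Complex.ofReal_zero |>.mono_left nhdsWithin_le_nhds)
    (by filter_upwards [self_mem_nhdsWithin] with t ht using Complex.ofReal_ne_zero.2 ht.ne')

theorem tendsto_zpow_mul_exp_div_nhdsGT_zero (m : ℤ) {b : ℝ} (hb : b < 0) :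
    Tendsto (fun t : ℝ => t ^ m * Real.exp (b / t)) (𝓝[>] 0) (𝓝 0) := by
  have h := (isLittleO_zpow_exp_pos_mul_atTop (-m) (neg_pos.2 hb)).tendsto_div_nhds_zero
  refine (h.comp tendsto_inv_nhdsGT_zero).congr' ?_
  filter_upwards [self_mem_nhdsWithin] with t ht
  simp [div_eq_mul_inv, Real.exp_neg]

theorem MeromorphicAt.tendsto_mul_exp_div_nhdsGT_zero {f : ℂ → ℂ} (hf : MeromorphicAt f 0)
    {c : ℂ} (hc : c.re < 0) :
    Tendsto (fun t : ℝ => f t * Complex.exp (c / t)) (𝓝[>] 0) (𝓝 0) := by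
  obtain ⟨m, hm⟩ := hf.exists_isBigO_zpow
  have hf' : (fun t : ℝ => f t) =O[𝓝[>] 0] fun t : ℝ => (t : ℂ) ^ m := by
    simpa only [sub_zero, Function.comp_def] using hm.comp_tendsto tendsto_ofReal_nhdsGT_zero
  refine (hf'.mul (isBigO_refl (fun t : ℝ => Complex.exp (c / t)) _)).trans_tendsto ?_
  rw [tendsto_zero_iff_norm_tendsto_zero]
  refine (tendsto_zpow_mul_exp_div_nhdsGT_zero m hc).congr' ?_
  filter_upwards [self_mem_nhdsWithin] with t ht
  rw [norm_mul, norm_zpow, Complex.norm_real, Real.norm_of_nonneg (le_of_lt ht), Complex.norm_exp,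
    Complex.div_ofReal_re]

theorem eventually_eq_zero_of_sum_mul_exp_div_eq_zero_of_forall_lt {ι : Type*} [Fintype ι]
    {a : ι → ℂ → ℂ} {r : ι → ℝ} (ha : ∀ i, MeromorphicAt (a i) 0)
    (hsum : ∀ᶠ z in 𝓝[≠] 0, ∑ i, a i z * Complex.exp (r i / z) = 0) {k : ι}
    (hk : ∀ i ≠ k, r i < r k ∨ ∀ᶠ z in 𝓝[≠] 0, a i z = 0) :
    ∀ᶠ z in 𝓝[≠] 0, a k z = 0 := by
  classical
  refine (ha k).eventually_eq_zero_or_eventually_ne_zero.resolve_right fun hak => ?_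
  have hrel : ∀ᶠ z in 𝓝[≠] 0, ∑ i, a i z / a k z * Complex.exp ((r i - r k : ℝ) / z) = 0 := by
    filter_upwards [hsum, hak] with z hz hkz
    have hexp (i : ι) :
        Complex.exp ((r i - r k : ℝ) / z) = Complex.exp (r i / z) / Complex.exp (r k / z) := by
      rw [← Complex.exp_sub, Complex.ofReal_sub, sub_div]
    simp_rw [hexp, div_mul_div_comm, ← Finset.sum_div, hz, zero_div]
  have hterm : ∀ i, Tendsto (fun t : ℝ => a i t / a k t * Complex.exp ((r i - r k : ℝ) / t))
      (𝓝[>] 0) (𝓝 (if i = k then 1 else 0)) := by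
    intro i
    rcases eq_or_ne i k with rfl | hik
    · rw [if_pos rfl]
      refine tendsto_const_nhds.congr' ?_
      filter_upwards [tendsto_ofReal_nhdsGT_zero.eventually hak] with t ht
      simp [ht]
    rw [if_neg hik]
    rcases hk i hik with hlt | hzero
    · exact ((ha i).div (ha k)).tendsto_mul_exp_div_nhdsGT_zero (by simpa using hlt)
    · refine tendsto_const_nhds.congr' ?_
      filter_upwards [tendsto_ofReal_nhdsGT_zero.eventually hzero] with t ht
      simp [ht]
  have hlim := tendsto_finsetSum Finset.univ fun i _ => hterm i
  rw [Finset.sum_ite_eq' Finset.univ k, if_pos (Finset.mem_univ k)] at hlim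
  have hzero := tendsto_ofReal_nhdsGT_zero.eventually hrel
  exact one_ne_zero <| tendsto_nhds_unique (hlim.congr' hzero) tendsto_const_nhds

theorem eventually_eq_zero_of_sum_mul_exp_div_eq_zero {ι : Type*} [Fintype ι]
    {a : ι → ℂ → ℂ} {r : ι → ℝ} (hr : Function.Injective r) (ha : ∀ i, MeromorphicAt (a i) 0)
    (hsum : ∀ᶠ z in 𝓝[≠] 0, ∑ i, a i z * Complex.exp (r i / z) = 0) :
    ∀ i, ∀ᶠ z in 𝓝[≠] 0, a i z = 0 := by
  classical
  by_contra! ⟨i₀, hi₀⟩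
  obtain ⟨k, hk, hmax⟩ := Finset.exists_max_image
    (Finset.univ.filter fun i => ¬ ∀ᶠ z in 𝓝[≠] 0, a i z = 0) r ⟨i₀, by simpa using hi₀⟩
  refine (Finset.mem_filter.1 hk).2
    (eventually_eq_zero_of_sum_mul_exp_div_eq_zero_of_forall_lt ha hsum fun i hik => ?_)
  by_cases hi : ∀ᶠ z in 𝓝[≠] 0, a i z = 0
  · exact .inr hi
  · exact .inl ((hmax i (by simpa using hi)).lt_of_ne (hr.ne hik))

theorem exp_inv_transcendental_general (n : ℕ) (a : Fin (n + 1) → ℂ → ℂ)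
    (ha : ∀ i, MeromorphicAt (a i) 0)
    (hsum : ∀ᶠ z in nhdsWithin 0 {(0 : ℂ)}ᶜ,
      ∑ i : Fin (n + 1), a i z * Complex.exp ((i : ℕ) / z) = 0) :
    ∀ i, ∀ᶠ z in nhdsWithin 0 {(0 : ℂ)}ᶜ, a i z = 0 :=
  eventually_eq_zero_of_sum_mul_exp_div_eq_zero (r := fun i => ((i : ℕ) : ℝ))
    (Nat.cast_injective.comp Fin.val_injective) ha
    (by simpa only [Complex.ofReal_natCast] using hsum)

/-- `exp (1/z)` is transcendental over germs of meromorphic functions at `0`: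
if `a₀, …, aₙ` (`n ≥ 1`) are meromorphic at `0` and
`∑ i, aᵢ z * exp (i/z) = 0` on a punctured neighborhood of `0`, then each `aᵢ`
vanishes on a punctured neighborhood of `0`. -/
theorem exp_inv_transcendental (n : ℕ) (hn : 1 ≤ n) (a : Fin (n + 1) → ℂ → ℂ)
    (ha : ∀ i, MeromorphicAt (a i) 0)
    (hsum : ∀ᶠ z in nhdsWithin 0 {(0 : ℂ)}ᶜ,
      ∑ i : Fin (n + 1), a i z * Complex.exp ((i : ℕ) / z) = 0) :
    ∀ i, ∀ᶠ z in nhdsWithin 0 {(0 : ℂ)}ᶜ, a i z = 0 :=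
  exp_inv_transcendental_general n a ha hsum
end

section
/- Let p, q ∈ ℂ[X] be polynomials with q ≠ 0. Suppose there exists a function h : ℂ → ℂ meromorphic at 0 such that h(u) · q(u · exp(-1/u)) = p(u · exp(-1/u)) for all u ≠ 0 in some punctured neighborhood of 0 in ℂ. Then the rational function p/q is constant, i.e., there exists c ∈ ℂ with p = c · q. -/
/-!
Along the positive reals, `w t = t * exp (-1 / t)` tends to `0` faster than every power of `t`.
A function meromorphic at `0` that is `O(exp (-1 / t))` as `t → 0⁺` vanishes identically, since
otherwise it behaves like a nonzero multiple of `t ^ m`. Hence if `h t = φ (w t)` with `h`, `φ`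
meromorphic at `0` and `φ → 0` there, then `φ = O(w)` forces `h ≡ 0`, so `φ` vanishes along
`w t` and therefore identically. Apply this to `φ = p / q - c` when `p / q` has a finite limit
`c` at `0`, which gives `p = c * q`, and to `φ = q / p` when `p / q` has a pole, which is absurd.
-/

open Polynomial Filter Topology Asymptotics

theorem Real.isLittleO_exp_neg_inv_zpow (m : ℤ) :
    (fun t : ℝ => Real.exp (-t⁻¹)) =o[𝓝[>] 0] fun t => t ^ m := by
  refine ((isLittleO_exp_neg_mul_rpow_atTop one_pos ((-m : ℤ) : ℝ)).comp_tendsto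
    tendsto_inv_nhdsGT_zero).congr' ?_ ?_
  · filter_upwards with t
    simp
  · filter_upwards with t
    simp only [Function.comp_apply, Real.rpow_intCast, inv_zpow', neg_neg]

theorem isBigO_sub_of_meromorphicOrderAt_pos {𝕜 E : Type*} [NontriviallyNormedField 𝕜]
    [NormedAddCommGroup E] [NormedSpace 𝕜 E] {f : 𝕜 → E} {x : 𝕜}
    (hf : 0 < meromorphicOrderAt f x) : f =O[𝓝[≠] x] (· - x) := by
  cases hn : meromorphicOrderAt f x with
  | top =>
    have hf0 : f =ᶠ[𝓝[≠] x] 0 := meromorphicOrderAt_eq_top_iff.1 hn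
    exact (isBigO_zero _ _).congr' hf0.symm .rfl
  | coe n =>
    obtain ⟨g, hg, -, hfg⟩ := (meromorphicOrderAt_eq_int_iff
      (meromorphicAt_of_meromorphicOrderAt_ne_zero hf.ne')).1 hn
    obtain ⟨k, rfl⟩ : ∃ k : ℕ, n = k + 1 := by
      have : 0 < n := by simpa [hn] using hf
      exact ⟨(n - 1).toNat, by omega⟩
    have hbdd : (fun z => (z - x) ^ k • g z) =O[𝓝[≠] x] fun _ => (1 : 𝕜) :=
      ((by fun_prop : ContinuousAt (fun z => (z - x) ^ k • g z) x).tendsto.mono_left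
        nhdsWithin_le_nhds).isBigO_one 𝕜
    refine ((isBigO_refl (· - x) _).smul hbdd).congr' ?_ (by simp)
    filter_upwards [hfg] with z hz
    rw [hz, smul_smul, ← pow_succ']
    norm_cast

theorem Polynomial.eventually_nhdsNE_eval_ne_zero {R : Type*} [CommRing R] [IsDomain R]
    [TopologicalSpace R] [T1Space R] {p : R[X]} (hp : p ≠ 0) (z : R) :
    ∀ᶠ w in 𝓝[≠] z, p.eval w ≠ 0 :=
  ((finite_setOfPred_isRoot hp).eventually_cofinite_notMem).filter_mono (nhdsNE_le_cofinite z)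

theorem Polynomial.eq_C_mul_of_eventually_eval_div_eq {K : Type*} [Field K]
    [TopologicalSpace K] [T1Space K] {z : K} [(𝓝[≠] z).NeBot] {p q : K[X]} (hq : q ≠ 0)
    {c : K} (hpq : ∀ᶠ w in 𝓝[≠] z, p.eval w / q.eval w = c) : p = C c * q := by
  rw [← sub_eq_zero]
  by_contra hne
  obtain ⟨w, hw, hpqw, hqw⟩ := ((eventually_nhdsNE_eval_ne_zero hne z).and
    (hpq.and (eventually_nhdsNE_eval_ne_zero hq z))).exists
  rw [div_eq_iff hqw] at hpqw
  simp [hpqw] at hw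

namespace Complex

theorem tendsto_ofReal_nhdsGT_zero : Tendsto ofReal (𝓝[>] 0) (𝓝[≠] 0) :=
  continuous_ofReal.continuousWithinAt.tendsto_nhdsWithin fun _ ht => by
    simpa using (Set.mem_Ioi.1 ht).ne'

theorem ofReal_mul_exp_neg_inv (t : ℝ) :
    (t : ℂ) * exp (-1 / t) = ((t * Real.exp (-t⁻¹) : ℝ) : ℂ) := by
  push_cast
  ring_nf

theorem tendsto_ofReal_mul_exp_neg_inv :
    Tendsto (fun t : ℝ => (t : ℂ) * exp (-1 / t)) (𝓝[>] 0) (𝓝[≠] 0) := by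
  simp only [ofReal_mul_exp_neg_inv]
  refine tendsto_ofReal_nhdsGT_zero.comp (tendsto_nhdsWithin_iff.2 ⟨?_, ?_⟩)
  · simpa using (tendsto_nhdsWithin_of_tendsto_nhds tendsto_id).mul
      (Real.tendsto_exp_neg_atTop_nhds_zero.comp tendsto_inv_nhdsGT_zero)
  · filter_upwards [self_mem_nhdsWithin] with t (ht : 0 < t)
    exact mul_pos ht (Real.exp_pos _)

end Complex

namespace MeromorphicAt

theorem eventuallyEq_zero_of_isBigO_exp_neg_inv {f : ℂ → ℂ} (hf : MeromorphicAt f 0)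
    (hO : (fun t : ℝ => f t) =O[𝓝[>] 0] fun t => Real.exp (-t⁻¹)) :
    f =ᶠ[𝓝[≠] 0] 0 := by
  by_contra hne
  obtain ⟨m, hm⟩ := WithTop.ne_top_iff_exists.1 (mt meromorphicOrderAt_eq_top_iff.1 hne)
  obtain ⟨g, hg, hg0, hfg⟩ := (meromorphicOrderAt_eq_int_iff hf).1 hm.symm
  have hg_lim : Tendsto (fun t : ℝ => g t) (𝓝[>] 0) (𝓝 (g 0)) :=
    hg.continuousAt.tendsto.comp
      (Complex.tendsto_ofReal_nhdsGT_zero.mono_right nhdsWithin_le_nhds)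
  have hzpow : (fun t : ℝ => (t : ℂ) ^ m) =O[𝓝[>] 0] fun t => Real.exp (-t⁻¹) := by
    refine (hO.mul ((hg_lim.inv₀ hg0).isBigO_one ℝ)).congr' ?_ (by simp)
    filter_upwards [Complex.tendsto_ofReal_nhdsGT_zero.eventually hfg,
      hg_lim.eventually_ne hg0] with t hft hgt
    simp [hft, hgt]
  have hzpow_real : (fun t : ℝ => t ^ m) =O[𝓝[>] 0] fun t => Real.exp (-t⁻¹) := by
    refine (isBigO_norm_left.2 hzpow).congr' ?_ .rfl
    filter_upwards [self_mem_nhdsWithin] with t (ht : 0 < t)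
    simp [abs_of_pos ht]
  refine isLittleO_irrefl' ?_
    (hzpow_real.trans_isLittleO (Real.isLittleO_exp_neg_inv_zpow m))
  refine Eventually.frequently ?_
  filter_upwards [self_mem_nhdsWithin] with t (ht : 0 < t)
  exact norm_ne_zero_iff.2 (zpow_ne_zero _ ht.ne')

theorem eventuallyEq_zero_of_eq_comp_mul_exp_neg_inv {f φ : ℂ → ℂ} (hf : MeromorphicAt f 0)
    (hφ : 0 < meromorphicOrderAt φ 0)
    (hfφ : ∀ᶠ t : ℝ in 𝓝[>] 0, f t = φ (t * Complex.exp (-1 / t))) :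
    φ =ᶠ[𝓝[≠] 0] 0 := by
  have hw : (fun t : ℝ => (t : ℂ) * Complex.exp (-1 / t) - 0) =O[𝓝[>] 0]
      fun t => Real.exp (-t⁻¹) := by
    refine IsBigO.of_bound 1 ?_
    filter_upwards [Ioo_mem_nhdsGT one_pos] with t ⟨ht0, ht1⟩
    rw [sub_zero, Complex.ofReal_mul_exp_neg_inv, Complex.norm_real, Real.norm_eq_abs,
      Real.norm_eq_abs, abs_of_pos (by positivity), abs_of_pos (Real.exp_pos _), one_mul]
    exact mul_le_of_le_one_left (Real.exp_pos _).le ht1.le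
  have hf0 := hf.eventuallyEq_zero_of_isBigO_exp_neg_inv
    ((((isBigO_sub_of_meromorphicOrderAt_pos hφ).comp_tendsto
      Complex.tendsto_ofReal_mul_exp_neg_inv).trans hw).congr' (hfφ.mono fun _ h => h.symm) .rfl)
  have hφ_mero := meromorphicAt_of_meromorphicOrderAt_ne_zero hφ.ne'
  refine hφ_mero.frequently_zero_iff_eventuallyEq_zero.1
    (Complex.tendsto_ofReal_mul_exp_neg_inv.frequently (Eventually.frequently ?_))
  filter_upwards [hfφ, Complex.tendsto_ofReal_nhdsGT_zero.eventually hf0] with t h1 h2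
  exact h1 ▸ h2

end MeromorphicAt

/-- If a rational function `p/q` of `u * exp (-1/u)` extends meromorphically through
`u = 0`, then `p/q` is constant. -/
theorem rational_of_mul_exp_neg_inv_constant (p q : Polynomial ℂ) (hq : q ≠ 0)
    (h : ℂ → ℂ) (hh : MeromorphicAt h 0)
    (heq : ∀ᶠ u in nhdsWithin 0 {(0 : ℂ)}ᶜ,
      h u * q.eval (u * Complex.exp (-1 / u)) = p.eval (u * Complex.exp (-1 / u))) :
    ∃ c : ℂ, p = Polynomial.C c * q := by
  set ρ : ℂ → ℂ := fun w => p.eval w / q.eval w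
  have hρ : MeromorphicAt ρ 0 :=
    (p.differentiable.analyticAt 0).meromorphicAt.div
      (q.differentiable.analyticAt 0).meromorphicAt
  have hq_ne := q.eventually_nhdsNE_eval_ne_zero hq 0
  have hhρ : ∀ᶠ t : ℝ in 𝓝[>] 0, h t = ρ (t * Complex.exp (-1 / t)) := by
    filter_upwards [Complex.tendsto_ofReal_nhdsGT_zero.eventually heq,
      Complex.tendsto_ofReal_mul_exp_neg_inv.eventually hq_ne] with t h1 h2
    exact eq_div_of_mul_eq h2 h1
  rcases lt_or_ge (meromorphicOrderAt ρ 0) 0 with hpole | hlim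
  · have hρ_inv : ρ⁻¹ =ᶠ[𝓝[≠] 0] 0 :=
      hh.inv.eventuallyEq_zero_of_eq_comp_mul_exp_neg_inv
        ((tendsto_zero_iff_meromorphicOrderAt_pos hρ.inv).1
          (tendsto_inv₀_cobounded.comp (tendsto_cobounded_of_meromorphicOrderAt_neg hpole)))
        (hhρ.mono fun t ht => by simp [ht])
    have : meromorphicOrderAt ρ 0 = ⊤ :=
      meromorphicOrderAt_eq_top_iff.2 (hρ_inv.mono fun _ hw => inv_eq_zero.1 hw)
    simp [this] at hpole
  · obtain ⟨c, hc⟩ := tendsto_nhds_of_meromorphicOrderAt_nonneg hρ hlim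
    have hρc := (hh.sub (.const c 0)).eventuallyEq_zero_of_eq_comp_mul_exp_neg_inv
      ((tendsto_zero_iff_meromorphicOrderAt_pos (hρ.sub (.const c 0))).1
        (by simpa [Pi.sub_def] using hc.sub_const c))
      (hhρ.mono fun t ht => by simp [ht])
    exact ⟨c, eq_C_mul_of_eventually_eval_div_eq hq (hρc.mono fun _ hw => sub_eq_zero.1 hw)⟩
end

section
/- Let p, q ∈ ℂ[X] be polynomials with q ≠ 0. Suppose there exists a function h : ℂ → ℂ meromorphic at 0 such that h(u) · q(u⁻¹ · exp(1/u)) = p(u⁻¹ · exp(1/u)) for all u ≠ 0 in some punctured neighborhood of 0 in ℂ. Then the rational function p/q is constant, i.e., there exists c ∈ ℂ with p = c · q. -/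
/-!
Along `u = 1 / y` with `y → +∞`, the argument `u⁻¹ * exp (1 / u) = y * exp y` has
`log ‖·‖ ∼ y`, so `log ‖P (y * exp y)‖ / y → deg P` for every nonzero polynomial `P`, whereas
a meromorphic function `f` that does not vanish identically near `0` has
`log ‖f (1 / y)‖ = O(log y)`. Hence `f * Q (y * exp y) = P (y * exp y)` forces `deg P = deg Q`.
Apply this to `f = h - c` and `P = p - c * q`, with `c` chosen so that `P` has no term of
degree `deg q`: then `deg P ≠ deg q`, so `P = 0`.
-/

open Polynomial Filter Topology Asymptotics Bornology Real

theorem Polynomial.tendsto_log_norm_eval_sub_natDegree_mul_log_norm {𝕜 : Type*}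
    [NormedField 𝕜] {P : 𝕜[X]} (hP : P ≠ 0) :
    Tendsto (fun w ↦ log ‖P.eval w‖ - P.natDegree * log ‖w‖) (cobounded 𝕜)
      (𝓝 (log ‖P.leadingCoeff‖)) := by
  have hlc : P.leadingCoeff ≠ 0 := leadingCoeff_ne_zero.2 hP
  have hratio : Tendsto (fun w ↦ P.eval w / (P.leadingCoeff * w ^ P.natDegree)) (cobounded 𝕜)
      (𝓝 1) := by
    refine (isEquivalent_iff_tendsto_one ?_).1 isEquivalent_cobounded_leading_monomial
    filter_upwards [eventually_ne_cobounded 0] with w hw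
    exact mul_ne_zero hlc (pow_ne_zero _ hw)
  have hlog := (hratio.norm.log (by simp)).add_const (log ‖P.leadingCoeff‖)
  rw [norm_one, log_one, zero_add] at hlog
  refine hlog.congr' ?_
  filter_upwards [eventually_ne_cobounded 0, le_cofinite _ (eventually_cofinite_not_isRoot hP)]
    with w hw hPw
  rw [norm_div, norm_mul, norm_pow, log_div (norm_ne_zero_iff.2 hPw) (by simp [hlc, hw]),
    log_mul (by simp [hlc]) (by simp [hw]), log_pow]
  ring

theorem Polynomial.tendsto_log_norm_eval_comp_div {α 𝕜 : Type*} [NormedField 𝕜] {l : Filter α}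
    {E : α → 𝕜} {g : α → ℝ} {ρ : ℝ} (hE : Tendsto E l (cobounded 𝕜)) (hg : Tendsto g l atTop)
    (hEg : Tendsto (fun a ↦ log ‖E a‖ / g a) l (𝓝 ρ)) {P : 𝕜[X]} (hP : P ≠ 0) :
    Tendsto (fun a ↦ log ‖P.eval (E a)‖ / g a) l (𝓝 (P.natDegree * ρ)) := by
  have := (((tendsto_log_norm_eval_sub_natDegree_mul_log_norm hP).comp hE).div_atTop hg).add
    (hEg.const_mul (P.natDegree : ℝ))
  rw [zero_add] at this
  refine this.congr fun a ↦ ?_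
  simp only [Function.comp_apply]
  ring

theorem MeromorphicAt.isBigO_log_norm {𝕜 E : Type*} [NontriviallyNormedField 𝕜]
    [NormedAddCommGroup E] [NormedSpace 𝕜 E] {f : 𝕜 → E} {x : 𝕜} (hf : MeromorphicAt f x)
    (ho : meromorphicOrderAt f x ≠ ⊤) :
    (fun z ↦ log ‖f z‖) =O[𝓝[≠] x] fun z ↦ log ‖z - x‖ := by
  set m := (meromorphicOrderAt f x).untop₀
  set T := (· - x) ^ (-m) • f
  have hT : Tendsto (fun z ↦ log ‖T z‖) (𝓝[≠] x) (𝓝 (log ‖meromorphicTrailingCoeffAt f x‖)) :=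
    hf.tendsto_nhds_meromorphicTrailingCoeffAt.norm.log
      (norm_ne_zero_iff.2 (hf.meromorphicTrailingCoeffAt_ne_zero ho))
  have hone : (fun _ ↦ (1 : ℝ)) =O[𝓝[≠] x] fun z ↦ log ‖z - x‖ :=
    ((isLittleO_one_left_iff ℝ).2 <| tendsto_abs_atBot_atTop.comp <|
      tendsto_log_nhdsGT_zero.comp (tendsto_norm_sub_self_nhdsNE x)).isBigO
  have hsplit : (fun z ↦ log ‖T z‖ + m * log ‖z - x‖) =ᶠ[𝓝[≠] x] fun z ↦ log ‖f z‖ := by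
    filter_upwards [self_mem_nhdsWithin,
      (meromorphicOrderAt_ne_top_iff_eventually_ne_zero hf).1 ho] with z hz hfz
    have hzx : ‖z - x‖ ≠ 0 := norm_ne_zero_iff.2 (sub_ne_zero.2 hz)
    simp only [T, Pi.smul_apply', Pi.pow_apply, norm_smul, norm_zpow]
    rw [log_mul (zpow_ne_zero _ hzx) (norm_ne_zero_iff.2 hfz), log_zpow]
    push_cast
    ring
  exact ((hT.isBigO_one ℝ).trans hone |>.add
    ((isBigO_refl (fun z ↦ log ‖z - x‖) _).const_mul_left (m : ℝ))).congr' hsplit .rfl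

theorem tendsto_ofReal_inv_atTop_nhdsNE_zero :
    Tendsto (fun y : ℝ ↦ (y : ℂ)⁻¹) atTop (𝓝[≠] 0) :=
  tendsto_inv₀_cobounded'.comp (RCLike.tendsto_ofReal_atTop_cobounded ℂ)

theorem MeromorphicAt.tendsto_log_norm_comp_ofReal_inv_div {E : Type*} [NormedAddCommGroup E]
    [NormedSpace ℂ E] {f : ℂ → E} (hf : MeromorphicAt f 0) (ho : meromorphicOrderAt f 0 ≠ ⊤) :
    Tendsto (fun y : ℝ ↦ log ‖f (y : ℂ)⁻¹‖ / y) atTop (𝓝 0) := by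
  have hlog : (fun y : ℝ ↦ log ‖(y : ℂ)⁻¹ - 0‖) =o[atTop] fun y ↦ y := by
    refine isLittleO_log_id_atTop.neg_left.congr' ?_ .rfl
    filter_upwards [eventually_gt_atTop 0] with y hy
    simp [Complex.norm_real, abs_of_pos hy]
  exact ((hf.isBigO_log_norm ho).comp_tendsto tendsto_ofReal_inv_atTop_nhdsNE_zero).trans_isLittleO
    hlog |>.tendsto_div_nhds_zero

theorem tendsto_ofReal_mul_exp_atTop_cobounded :
    Tendsto (fun y : ℝ ↦ (y : ℂ) * Complex.exp y) atTop (cobounded ℂ) := by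
  rw [← tendsto_norm_atTop_iff_cobounded]
  refine (tendsto_id.atTop_mul_atTop₀ tendsto_exp_atTop).congr' ?_
  filter_upwards [eventually_ge_atTop 0] with y hy
  simp [Complex.norm_exp, abs_of_nonneg hy]

theorem tendsto_log_norm_ofReal_mul_exp_div :
    Tendsto (fun y : ℝ ↦ log ‖(y : ℂ) * Complex.exp y‖ / y) atTop (𝓝 1) := by
  have := isLittleO_log_id_atTop.tendsto_div_nhds_zero.add_const 1
  rw [zero_add] at this
  refine this.congr' ?_
  filter_upwards [eventually_gt_atTop 0] with y hy
  simp [Complex.norm_exp, abs_of_pos hy, log_mul hy.ne' (exp_pos y).ne', add_div, hy.ne']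

theorem natDegree_eq_of_meromorphicAt_mul_eval_inv_mul_exp_inv {f : ℂ → ℂ} (hf : MeromorphicAt f 0)
    {P Q : ℂ[X]} (hP : P ≠ 0) (hQ : Q ≠ 0)
    (heq : ∀ᶠ u in 𝓝[≠] 0,
      f u * Q.eval (u⁻¹ * Complex.exp (1 / u)) = P.eval (u⁻¹ * Complex.exp (1 / u))) :
    P.natDegree = Q.natDegree := by
  have hE := tendsto_ofReal_mul_exp_atTop_cobounded
  have heq' : ∀ᶠ y : ℝ in atTop,
      f (y : ℂ)⁻¹ * Q.eval (y * Complex.exp y) = P.eval (y * Complex.exp y) := by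
    simpa using tendsto_ofReal_inv_atTop_nhdsNE_zero.eventually heq
  have hPE := hE.eventually (le_cofinite _ (eventually_cofinite_not_isRoot hP))
  have ho : meromorphicOrderAt f 0 ≠ ⊤ := by
    intro htop
    obtain ⟨y, hy, hfy, hPy⟩ := (heq'.and <| (tendsto_ofReal_inv_atTop_nhdsNE_zero.eventually
      (meromorphicOrderAt_eq_top_iff.1 htop)).and hPE).exists
    exact hPy (by rw [IsRoot, ← hy, hfy, zero_mul])
  have hlim := ((hf.tendsto_log_norm_comp_ofReal_inv_div ho).add
    (tendsto_log_norm_eval_comp_div hE tendsto_id tendsto_log_norm_ofReal_mul_exp_div hQ))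
  have hsum : ∀ᶠ y : ℝ in atTop, log ‖f (y : ℂ)⁻¹‖ / y + log ‖Q.eval (y * Complex.exp y)‖ / y
      = log ‖P.eval (y * Complex.exp y)‖ / y := by
    filter_upwards [heq', hPE] with y hy hPy
    rw [IsRoot, ← hy] at hPy
    obtain ⟨hfy, hQy⟩ := mul_ne_zero_iff.1 hPy
    rw [← add_div, ← log_mul (by simpa using hfy) (by simpa using hQy), ← norm_mul, hy]
  have := tendsto_nhds_unique (hlim.congr' hsum)
    (tendsto_log_norm_eval_comp_div hE tendsto_id tendsto_log_norm_ofReal_mul_exp_div hP)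
  simpa using this.symm

/-- If a rational function `p/q` of `u⁻¹ * exp (1/u)` extends meromorphically through
`u = 0`, then `p/q` is constant. -/
theorem rational_of_inv_mul_exp_inv_constant (p q : Polynomial ℂ) (hq : q ≠ 0)
    (h : ℂ → ℂ) (hh : MeromorphicAt h 0)
    (heq : ∀ᶠ u in nhdsWithin 0 {(0 : ℂ)}ᶜ,
      h u * q.eval (u⁻¹ * Complex.exp (1 / u)) = p.eval (u⁻¹ * Complex.exp (1 / u))) :
    ∃ c : ℂ, p = Polynomial.C c * q := by
  set c := p.coeff q.natDegree / q.leadingCoeff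
  refine ⟨c, ?_⟩
  by_contra hne
  have hr : p - C c * q ≠ 0 := sub_ne_zero.2 hne
  have hcoeff : (p - C c * q).coeff q.natDegree = 0 := by
    rw [coeff_sub, coeff_C_mul, coeff_natDegree, div_mul_cancel₀ _ (leadingCoeff_ne_zero.2 hq),
      sub_self]
  have hdeg : (p - C c * q).natDegree = q.natDegree := by
    refine natDegree_eq_of_meromorphicAt_mul_eval_inv_mul_exp_inv (hh.sub (.const c 0)) hr hq ?_
    filter_upwards [heq] with u hu
    simp only [Pi.sub_apply, eval_sub, eval_mul, eval_C, sub_mul, hu]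
  exact leadingCoeff_ne_zero.2 hr (by rw [leadingCoeff, hdeg, hcoeff])
end
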